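/- Let G be a finite simple graph and let d be a vertex of degree 1 in G with neighbor c. If d belongs to no minimum dominating set of G, then the edge cd is γ-critical, i.e., γ(G − cd) = γ(G) + 1; in particular the bondage number of G equals 1. -/

import Mathlib

open SimpleGraph

/-- `S` is a dominating set of `G`. -/
def IsDomSet {V : Type*} (G : SimpleGraph V) (S : Finset V) : Prop :=
  ∀ v : V, v ∈ S ∨ ∃ u ∈ S, G.Adj u v

/-- The domination number `γ(G)`. -/
noncomputable def domNum {V : Type*} (G : SimpleGraph V) : ℕ :=
  sInf {n | ∃ S : Finset V, IsDomSet G S ∧ S.card = n}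

/-- `C` is a vertex cover of `G`. -/
def IsVC {V : Type*} (G : SimpleGraph V) (C : Finset V) : Prop :=
  ∀ e ∈ G.edgeSet, ∃ x ∈ C, x ∈ e

/-- The vertex cover number `τ(G)`. -/
noncomputable def tau {V : Type*} (G : SimpleGraph V) : ℕ :=
  sInf {n | ∃ C : Finset V, IsVC G C ∧ C.card = n}

/-- `S` is an independent set of `G`. -/
def IsIndep {V : Type*} (G : SimpleGraph V) (S : Finset V) : Prop :=
  ∀ a ∈ S, ∀ b ∈ S, ¬ G.Adj a b

/-- The independence number `α(G)`. -/
noncomputable def indepNum {V : Type*} (G : SimpleGraph V) : ℕ :=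
  sSup {n | ∃ S : Finset V, IsIndep G S ∧ S.card = n}

/-- The bondage number `b(G)`. -/
noncomputable def bondage {V : Type*} (G : SimpleGraph V) : ℕ :=
  sInf {n | ∃ E' : Finset (Sym2 V), ↑E' ⊆ G.edgeSet ∧ E'.card = n ∧
    domNum (G.deleteEdges ↑E') = domNum G + 1}

/-- The graph `G_v+u` obtained from `G` by adding one new vertex (`none`) adjacent only to `v`. -/
def addLeaf {V : Type*} (G : SimpleGraph V) (v : V) : SimpleGraph (Option V) :=
  SimpleGraph.fromRel (fun x y =>
    (∃ a b, x = some a ∧ y = some b ∧ G.Adj a b) ∨ (x = some v ∧ y = none))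

/-- The graph `G_A+` obtained from `G` by adding, for each `v ∈ A`, one new pendant
vertex adjacent only to `v`. -/
def addLeaves {V : Type*} (G : SimpleGraph V) (A : Finset V) :
    SimpleGraph (V ⊕ {x // x ∈ A}) :=
  SimpleGraph.fromRel (fun x y =>
    (∃ a b, x = Sum.inl a ∧ y = Sum.inl b ∧ G.Adj a b) ∨
    (∃ a : {x // x ∈ A}, x = Sum.inl a.1 ∧ y = Sum.inr a))

/-- The `3`-subdivision of the edge `uv` of `G`: the edge `uv` is deleted, three new
vertices `u' = Sum.inr 0`, `w = Sum.inr 1`, `v' = Sum.inr 2` are added, together with the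
four edges `u u'`, `u' w`, `w v'`, `v' v`. -/
def subdiv3 {V : Type*} (G : SimpleGraph V) (u v : V) : SimpleGraph (V ⊕ Fin 3) :=
  SimpleGraph.fromRel (fun x y =>
    match x, y with
    | Sum.inl a, Sum.inl b => G.Adj a b ∧ s(a, b) ≠ s(u, v)
    | Sum.inl a, Sum.inr i => (a = u ∧ i = 0) ∨ (a = v ∧ i = 2)
    | Sum.inr i, Sum.inr j => (i = 0 ∧ j = 1) ∨ (i = 1 ∧ j = 2)
    | _, _ => False)

/-!
A minimum dominating set `S` of `G` avoids the leaf `d`, so it contains `c`, and then `S ∪ {d}`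
dominates `G − cd`. Conversely `d` is isolated in `G − cd`, so every dominating set of `G − cd`
contains `d`; such a set also dominates `G`, hence it is not a minimum one there and is larger
than `γ(G)`.
-/

open Finset

section Domination

variable {V : Type*} {G H : SimpleGraph V} {S : Finset V}

lemma IsDomSet.mono (hGH : G ≤ H) (hS : IsDomSet G S) : IsDomSet H S := fun v =>
  (hS v).imp_right fun ⟨u, hu, huv⟩ => ⟨u, hu, hGH huv⟩

lemma IsDomSet.mem_of_forall_not_adj {v : V} (hS : IsDomSet G S) (hv : ∀ u, ¬ G.Adj u v) :
    v ∈ S :=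
  (hS v).resolve_right fun ⟨u, _, huv⟩ => hv u huv

lemma IsDomSet.mem_of_forall_adj_eq {c d : V} (hS : IsDomSet G S) (hdS : d ∉ S)
    (hleaf : ∀ u, G.Adj d u → u = c) : c ∈ S := by
  obtain ⟨u, hu, hud⟩ := (hS d).resolve_left hdS
  rwa [← hleaf u hud.symm]

lemma IsDomSet.insert_deleteEdges [DecidableEq V] {u v : V} (hS : IsDomSet G S) (hu : u ∈ S) :
    IsDomSet (G.deleteEdges {s(u, v)}) (insert v S) := by
  intro w
  by_cases hwv : w = v
  · exact Or.inl (hwv ▸ mem_insert_self v S)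
  rcases hS w with hwS | ⟨x, hxS, hxw⟩
  · exact Or.inl (mem_insert_of_mem hwS)
  by_cases hxw_uv : s(x, w) = s(u, v)
  · rcases Sym2.eq_iff.1 hxw_uv with ⟨-, hwv'⟩ | ⟨-, rfl⟩
    · exact absurd hwv' hwv
    · exact Or.inl (mem_insert_of_mem hu)
  · exact Or.inr ⟨x, mem_insert_of_mem hxS, deleteEdges_adj.2 ⟨hxw, hxw_uv⟩⟩

lemma domNum_le_card (hS : IsDomSet G S) : domNum G ≤ S.card :=
  Nat.sInf_le ⟨S, hS, rfl⟩

lemma exists_isDomSet_card_eq_domNum [Fintype V] (G : SimpleGraph V) :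
    ∃ S : Finset V, IsDomSet G S ∧ S.card = domNum G :=
  Nat.sInf_mem (s := {n | ∃ S : Finset V, IsDomSet G S ∧ S.card = n})
    ⟨#univ, univ, fun v => Or.inl (mem_univ v), rfl⟩

theorem domNum_deleteEdges_eq_succ_of_leaf [Fintype V] {c d : V}
    (hleaf : ∀ u, G.Adj d u → u = c)
    (h : ∀ S : Finset V, IsDomSet G S → S.card = domNum G → d ∉ S) :
    domNum (G.deleteEdges {s(c, d)}) = domNum G + 1 := by
  classical
  obtain ⟨S, hS, hScard⟩ := exists_isDomSet_card_eq_domNum G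
  have hdS := h S hS hScard
  have hle : domNum (G.deleteEdges {s(c, d)}) ≤ domNum G + 1 := by
    have := domNum_le_card (hS.insert_deleteEdges (v := d) (hS.mem_of_forall_adj_eq hdS hleaf))
    rwa [card_insert_of_notMem hdS, hScard] at this
  obtain ⟨T, hT, hTcard⟩ := exists_isDomSet_card_eq_domNum (G.deleteEdges {s(c, d)})
  have hdT : d ∈ T := hT.mem_of_forall_not_adj fun u hud => by
    obtain ⟨hud, hne⟩ := deleteEdges_adj.1 hud
    exact hne (hleaf u hud.symm ▸ rfl)
  have hTG : IsDomSet G T := hT.mono (deleteEdges_le _)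
  have hlt : domNum G < T.card :=
    (domNum_le_card hTG).lt_of_ne fun heq => h T hTG heq.symm hdT
  omega

lemma bondage_eq_one_of_domNum_deleteEdges {e : Sym2 V} (he : e ∈ G.edgeSet)
    (hcrit : domNum (G.deleteEdges {e}) = domNum G + 1) : bondage G = 1 := by
  have hone : 1 ∈ {n | ∃ E' : Finset (Sym2 V), ↑E' ⊆ G.edgeSet ∧ E'.card = n ∧
      domNum (G.deleteEdges ↑E') = domNum G + 1} :=
    ⟨{e}, by simpa using he, card_singleton e, by simpa using hcrit⟩
  obtain ⟨E', -, hcard, hE'⟩ := Nat.sInf_mem ⟨1, hone⟩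
  have hE'_ne : E' ≠ ∅ := by
    rintro rfl
    simp at hE'
  have hle : bondage G ≤ 1 := Nat.sInf_le hone
  have hpos : 0 < bondage G := by
    rw [bondage, ← hcard]
    exact card_pos.2 (nonempty_iff_ne_empty.2 hE'_ne)
  omega

end Domination

theorem stmt12_general {V : Type*} [Fintype V] (G : SimpleGraph V)
    [DecidableRel G.Adj] (c d : V) (hadj : G.Adj c d) (hdeg : G.degree d = 1)
    (h : ∀ S : Finset V, IsDomSet G S → S.card = domNum G → d ∉ S) :
    domNum (G.deleteEdges {s(c, d)}) = domNum G + 1 ∧ bondage G = 1 := by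
  obtain ⟨c', -, hc'⟩ := degree_eq_one_iff_existsUnique_adj.1 hdeg
  have hleaf : ∀ u, G.Adj d u → u = c := fun u hu => (hc' u hu).trans (hc' c hadj.symm).symm
  have hcrit := domNum_deleteEdges_eq_succ_of_leaf hleaf h
  exact ⟨hcrit, bondage_eq_one_of_domNum_deleteEdges hadj hcrit⟩

/-- If `d` is a vertex of degree `1` with neighbor `c`, and `d` belongs to no minimum
dominating set of `G`, then the edge `cd` is `γ`-critical; in particular `b(G) = 1`. -/
theorem stmt12 {V : Type*} [Fintype V] [DecidableEq V] (G : SimpleGraph V)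
    [DecidableRel G.Adj] (c d : V) (hadj : G.Adj c d) (hdeg : G.degree d = 1)
    (h : ∀ S : Finset V, IsDomSet G S → S.card = domNum G → d ∉ S) :
    domNum (G.deleteEdges {s(c, d)}) = domNum G + 1 ∧ bondage G = 1 :=
  stmt12_general G c d hadj hdeg h
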